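/- Let A₀, A₁ ≥ 2 be integers and p₀ ∈ (0,1), p₁ = 1 - p₀, and let α* be the matrix with entries α*_{ij} = δ_{ij}(1/A_i + (1 - 1/A_i) p_i) + (1 - δ_{ij})(1 - 1/A_i) p_j. Then the row vector (p, 1-p) with p = p₀A₀(A₁ - 1) / (A₀A₁ - p₁A₁ - p₀A₀) satisfies the equilibrium equation (p, 1-p)·α* = (p, 1-p), and moreover p ∈ (0,1). -/

import Mathlib

/-!
Every row of `α*` sums to one, so `α*` is the transition matrix of a two-state chain, and a
row vector `(p, 1 - p)` is stationary for such a chain exactly when the flows between the two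
states balance: `p α*₀₁ = (1 - p) α*₁₀`. Writing `x = p₀ A₀ (A₁ - 1)` and `y = p₁ A₁ (A₀ - 1)`,
both flows equal `p₀ p₁ (1 - 1/A₀)(1 - 1/A₁)` for `p = x / (x + y)`, and `x + y` is the stated
denominator because `p₀ + p₁ = 1`. Positivity of `x` and `y` puts `p` in `(0, 1)`.
-/

lemma sum_eq_one_of_eq_ite_one_sub_mul {ι R : Type*} [Fintype ι] [DecidableEq ι] [CommRing R]
    (c : ι → R) (q : ι → R) (hq : ∑ j, q j = 1) (M : Matrix ι ι R)
    (hM : ∀ i j, M i j = if i = j then c i + (1 - c i) * q i else (1 - c i) * q j) (i : ι) :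
    ∑ j, M i j = 1 := by
  have hM' : ∀ j, M i j = (if i = j then c i else 0) + (1 - c i) * q j := by
    intro j
    rw [hM]
    split_ifs with h <;> simp [h]
  simp only [hM', Finset.sum_add_distrib, Finset.sum_ite_eq, Finset.mem_univ, if_true,
    ← Finset.mul_sum, hq]
  ring

lemma two_state_stationary_of_flow_balance {R : Type*} [CommRing R] (M : Matrix (Fin 2) (Fin 2) R)
    (hrow : ∀ i, ∑ j, M i j = 1) (p : R) (hbal : p * M 0 1 = (1 - p) * M 1 0) (j : Fin 2) :
    ∑ i, ![p, 1 - p] i * M i j = ![p, 1 - p] j := by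
  have h0 := hrow 0
  have h1 := hrow 1
  simp only [Fin.sum_univ_two] at h0 h1 ⊢
  fin_cases j
  · simp only [Matrix.cons_val_zero, Matrix.cons_val_one, Fin.zero_eta]
    linear_combination p * h0 - hbal
  · simp only [Matrix.cons_val_zero, Matrix.cons_val_one, Fin.mk_one]
    linear_combination (1 - p) * h1 + hbal

lemma div_add_mem_Ioo {x y : ℝ} (hx : 0 < x) (hy : 0 < y) : x / (x + y) ∈ Set.Ioo 0 1 :=
  ⟨by positivity, (div_lt_one (by positivity)).2 (by linarith)⟩

/-- The row vector `(p, 1-p)` with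
`p = p₀ A₀ (A₁ − 1) / (A₀ A₁ − p₁ A₁ − p₀ A₀)` satisfies the equilibrium equation
`(p, 1-p) · α* = (p, 1-p)` for the effective transition matrix `α*`, and `p ∈ (0,1)`. -/
theorem stmt_4 (A : Fin 2 → ℕ) (hA : ∀ i, 2 ≤ A i)
    (p₀ : ℝ) (hp0 : 0 < p₀) (hp0' : p₀ < 1)
    (p₁ : ℝ) (hp1 : p₁ = 1 - p₀)
    (pvec : Fin 2 → ℝ) (hpvec : pvec = ![p₀, p₁])
    (α : Matrix (Fin 2) (Fin 2) ℝ)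
    (hα : ∀ i j, α i j = if i = j then 1 / (A i : ℝ) + (1 - 1 / (A i : ℝ)) * pvec i
      else (1 - 1 / (A i : ℝ)) * pvec j)
    (p : ℝ)
    (hp : p = p₀ * (A 0 : ℝ) * ((A 1 : ℝ) - 1) /
      ((A 0 : ℝ) * (A 1 : ℝ) - p₁ * (A 1 : ℝ) - p₀ * (A 0 : ℝ))) :
    (∀ j, ∑ i, (![p, 1 - p]) i * α i j = (![p, 1 - p]) j) ∧ 0 < p ∧ p < 1 := by
  have ha : (2 : ℝ) ≤ A 0 := by exact_mod_cast hA 0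
  have hb : (2 : ℝ) ≤ A 1 := by exact_mod_cast hA 1
  set x := p₀ * (A 0 : ℝ) * ((A 1 : ℝ) - 1)
  set y := p₁ * (A 1 : ℝ) * ((A 0 : ℝ) - 1)
  have hx : 0 < x := by positivity [show (0 : ℝ) < A 1 - 1 by linarith]
  have hy : 0 < y := by
    have : 0 < p₁ := by linarith
    positivity [show (0 : ℝ) < A 0 - 1 by linarith]
  have hp_eq : p = x / (x + y) := by rw [hp]; congr 1; simp only [x, y, hp1]; ring
  have hrow := sum_eq_one_of_eq_ite_one_sub_mul (fun i ↦ 1 / (A i : ℝ)) pvec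
    (by simp [hpvec, hp1]) α hα
  have hbal : p * α 0 1 = (1 - p) * α 1 0 := by
    rw [hα, hα, hpvec, hp_eq]
    simp only [Fin.zero_ne_one, one_ne_zero, if_false, Matrix.cons_val_zero, Matrix.cons_val_one]
    field_simp
    ring
  exact ⟨two_state_stationary_of_flow_balance α hrow p hbal, hp_eq ▸ div_add_mem_Ioo hx hy⟩
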